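/- Let M, N be nonnegative integers with M ≡ N (mod 2), and let ξ₁, …, ξ_M ∈ ℂ∖{0}. Then the function r(ζ) = ∏_{k=1}^{M} t(ζ/ξ_k) satisfies the consistency condition r(ζ) · r(−σζq) = σ^N for every σ ∈ {+1,−1} and every ζ ∈ ℂ∖{0} such that all theta-function denominators occurring are nonzero. -/

import Mathlib

noncomputable section

open scoped BigOperators

/-- The infinite q-Pochhammer symbol `(a; p)_∞ = ∏_{k ≥ 0} (1 - a pᵏ)`. -/
def qPoch (a p : ℂ) : ℂ := ∏' k : ℕ, (1 - a * p ^ k)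

/-- The double infinite q-Pochhammer symbol `(a; p, p)_∞ = ∏_{k,l ≥ 0} (1 - a p^{k+l})`. -/
def qPoch2 (a p : ℂ) : ℂ := ∏' kl : ℕ × ℕ, (1 - a * p ^ (kl.1 + kl.2))

/-- `θ(z|p) = (z;p)_∞ (p/z;p)_∞`. -/
def theta (z p : ℂ) : ℂ := qPoch z p * qPoch (p / z) p

/-- `t(ζ) = ζ⁻¹ θ(qζ²|q⁴)/θ(qζ⁻²|q⁴)`. -/
def tfun (q ζ : ℂ) : ℂ := ζ⁻¹ * theta (q * ζ ^ 2) (q ^ 4) / theta (q * (ζ ^ 2)⁻¹) (q ^ 4)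

/-- `b(ζ) = (1-ζ²)q/(1-ζ²q²)`. -/
def Rb (q ζ : ℂ) : ℂ := (1 - ζ ^ 2) * q / (1 - ζ ^ 2 * q ^ 2)

/-- `c(ζ) = (1-q²)ζ/(1-ζ²q²)`. -/
def Rc (q ζ : ℂ) : ℂ := (1 - q ^ 2) * ζ / (1 - ζ ^ 2 * q ^ 2)

/-- The six-vertex R-matrix; the index `0 : Fin 2` encodes `+` and `1 : Fin 2` encodes `−`.
Rows are the upper (outgoing) indices, columns the lower (incoming) indices. -/
def Rmat (q ζ : ℂ) : Matrix (Fin 2 × Fin 2) (Fin 2 × Fin 2) ℂ :=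
  Matrix.of fun e f =>
    if e.1 = e.2 then (if f = e then 1 else 0)
    else if f = e then Rb q ζ
    else if f = (e.2, e.1) then Rc q ζ
    else 0

/-- The transposition `P(x⊗y) = y⊗x` on `V ⊗ V`. -/
def Pmat : Matrix (Fin 2 × Fin 2) (Fin 2 × Fin 2) ℂ :=
  Matrix.of fun e f => if f = (e.2, e.1) then 1 else 0

/-- The scalar factor `S₀(ζ)` with `z = ζ²`. -/
def S0 (q ζ : ℂ) : ℂ :=
  ζ * qPoch (ζ ^ 2)⁻¹ (q ^ 4) * qPoch (ζ ^ 2 * q ^ 2) (q ^ 4) /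
    (qPoch (ζ ^ 2) (q ^ 4) * qPoch ((ζ ^ 2)⁻¹ * q ^ 2) (q ^ 4))

/-- The scattering matrix `S(ζ) = S₀(ζ) R(ζ)`. -/
def Smat (q ζ : ℂ) : Matrix (Fin 2 × Fin 2) (Fin 2 × Fin 2) ℂ := S0 q ζ • Rmat q ζ

/-- Admissibility of the argument of the S-matrix: all denominators occurring in
`S(ζ)` are nonzero. -/
def Sdef (q ζ : ℂ) : Prop :=
  ζ ≠ 0 ∧ 1 - ζ ^ 2 * q ^ 2 ≠ 0 ∧ qPoch (ζ ^ 2) (q ^ 4) ≠ 0 ∧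
    qPoch ((ζ ^ 2)⁻¹ * q ^ 2) (q ^ 4) ≠ 0

/-- Kronecker (tensor) product of two operators on `V`. -/
def kron (A B : Matrix (Fin 2) (Fin 2) ℂ) : Matrix (Fin 2 × Fin 2) (Fin 2 × Fin 2) ℂ :=
  Matrix.of fun e f => A e.1 f.1 * B e.2 f.2

/-- `D = diag(δ, δ⁻¹)`. -/
def Dmat (δ : ℂ) : Matrix (Fin 2) (Fin 2) ℂ :=
  Matrix.of fun i j => if i = j then (if i = 0 then δ else δ⁻¹) else 0

/-- `D̄ = diag(δ, −δ⁻¹)`. -/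
def Dbar (δ : ℂ) : Matrix (Fin 2) (Fin 2) ℂ :=
  Matrix.of fun i j => if i = j then (if i = 0 then δ else -δ⁻¹) else 0

/-- The operator on `V^{⊗N}` acting as `M` on the `(j,k)`-th tensor factors and as the
identity elsewhere.  A vector of `V^{⊗N}` is encoded by its coordinates
`(Fin N → Fin 2) → ℂ` in the basis `v_{ε₁} ⊗ ⋯ ⊗ v_{ε_N}`. -/
def embed2 {N : ℕ} (M : Matrix (Fin 2 × Fin 2) (Fin 2 × Fin 2) ℂ) (j k : Fin N) :
    Matrix (Fin N → Fin 2) (Fin N → Fin 2) ℂ :=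
  Matrix.of fun a b =>
    M (a j, a k) (b j, b k) *
      ∏ i : Fin N, (if i = j ∨ i = k then 1 else if a i = b i then 1 else 0)

/-- The operator on `V^{⊗N}` acting as `M` on the `j`-th tensor factor. -/
def embed1 {N : ℕ} (M : Matrix (Fin 2) (Fin 2) ℂ) (j : Fin N) :
    Matrix (Fin N → Fin 2) (Fin N → Fin 2) ℂ :=
  Matrix.of fun a b =>
    M (a j) (b j) * ∏ i : Fin N, (if i = j then 1 else if a i = b i then 1 else 0)

/-- Number of `−` signs (i.e. of indices equal to `1`) in a basis configuration. -/
def countMinus {N : ℕ} (a : Fin N → Fin 2) : ℕ :=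
  (Finset.univ.filter fun i => a i = 1).card

/-- Membership in the weight subspace `V^{(n l)} ⊆ V^{⊗N}` (with `l = N - n`):
the coordinates vanish off configurations with exactly `n` minus signs. -/
def inVnl {N : ℕ} (n : ℕ) (v : (Fin N → Fin 2) → ℂ) : Prop :=
  ∀ a, countMinus a ≠ n → v a = 0

/-- The vector `w ⊗ u_σ ∈ V^{⊗N}`, where `w ∈ V^{⊗(N-2)}` occupies the slots `0,…,N-3`
and `u_σ = v₋⊗v₊ + σ v₊⊗v₋` occupies the slots `N-2, N-1`. -/
def tensU {N : ℕ} (hN : 2 ≤ N) (σ : ℂ) (w : (Fin (N - 2) → Fin 2) → ℂ) :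
    (Fin N → Fin 2) → ℂ :=
  fun a =>
    w (fun i => a ⟨i.1, by have := i.isLt; omega⟩) *
      (if a ⟨N - 2, by omega⟩ = 1 ∧ a ⟨N - 1, by omega⟩ = 0 then 1
       else if a ⟨N - 2, by omega⟩ = 0 ∧ a ⟨N - 1, by omega⟩ = 1 then σ else 0)

/-- `P₁₂ P₂₃ ⋯ P_{N−1,N}` on `V^{⊗N}` (1-based labels; 0-based sites `0,…,N-1`). -/
def Pchain (N : ℕ) : Matrix (Fin N → Fin 2) (Fin N → Fin 2) ℂ :=
  (List.ofFn fun t : Fin (N - 1) =>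
    embed2 Pmat ⟨t.1, by have := t.isLt; omega⟩ ⟨t.1 + 1, by have := t.isLt; omega⟩).prod

/-- `S_{1,…,N−2|N−1}(ζ₁,…,ζ_{N−2}|w) = S_{1,N−1}(ζ₁/w) ⋯ S_{N−2,N−1}(ζ_{N−2}/w)`
(1-based labels; the `j`-th spectral parameter `ζ_j` is `ζ (j-1)`). -/
def SchainUp (q : ℂ) (N : ℕ) (ζ : ℕ → ℂ) (w : ℂ) :
    Matrix (Fin N → Fin 2) (Fin N → Fin 2) ℂ :=
  (List.ofFn fun t : Fin (N - 2) =>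
    embed2 (Smat q (ζ t.1 / w)) ⟨t.1, by have := t.isLt; omega⟩
      ⟨N - 2, by have := t.isLt; omega⟩).prod

/-- `S_{N−1|1,…,N−2}(w|ζ₁,…,ζ_{N−2}) = S_{N−1,N−2}(w/ζ_{N−2}) ⋯ S_{N−1,1}(w/ζ₁)`. -/
def SchainDown (q : ℂ) (N : ℕ) (ζ : ℕ → ℂ) (w : ℂ) :
    Matrix (Fin N → Fin 2) (Fin N → Fin 2) ℂ :=
  (List.ofFn fun t : Fin (N - 2) =>
    embed2 (Smat q (w / ζ (N - 3 - t.1))) ⟨N - 2, by have := t.isLt; omega⟩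
      ⟨N - 3 - t.1, by have := t.isLt; omega⟩).prod

/-- `R_{N−1|1,…,N−2}(w|ζ₁,…,ζ_{N−2}) = R_{N−1,N−2}(w/ζ_{N−2}) ⋯ R_{N−1,1}(w/ζ₁)`. -/
def RchainDown (q : ℂ) (N : ℕ) (ζ : ℕ → ℂ) (w : ℂ) :
    Matrix (Fin N → Fin 2) (Fin N → Fin 2) ℂ :=
  (List.ofFn fun t : Fin (N - 2) =>
    embed2 (Rmat q (w / ζ (N - 3 - t.1))) ⟨N - 2, by have := t.isLt; omega⟩
      ⟨N - 3 - t.1, by have := t.isLt; omega⟩).prod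

/-- `R_{1,…,M−1|M}(ζ₁,…,ζ_{M−1}|w) = R_{1,M}(ζ₁/w) ⋯ R_{M−1,M}(ζ_{M−1}/w)` on `V^{⊗M}`. -/
def RchainUp (q : ℂ) (M : ℕ) (ζ : ℕ → ℂ) (w : ℂ) :
    Matrix (Fin M → Fin 2) (Fin M → Fin 2) ℂ :=
  (List.ofFn fun t : Fin (M - 1) =>
    embed2 (Rmat q (ζ t.1 / w)) ⟨t.1, by have := t.isLt; omega⟩
      ⟨M - 1, by have := t.isLt; omega⟩).prod

/-- The action of `Δ^{(M-1)}(f₀)` on the tensor product of evaluation representations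
with parameters `ζ 0, …, ζ (M-1)`:
`π(f₀) = Σ_j 1^{⊗j} ⊗ π_{ζ_j}(f₀) ⊗ π(t₀⁻¹) ⊗ ⋯ ⊗ π(t₀⁻¹)`, where
`π_ζ(f₀)v₊ = 0`, `π_ζ(f₀)v₋ = ζ⁻¹v₊`, `π_ζ(t₀⁻¹)v₊ = q v₊`, `π_ζ(t₀⁻¹)v₋ = q⁻¹ v₋`. -/
def f0op (q : ℂ) (M : ℕ) (ζ : ℕ → ℂ) : Matrix (Fin M → Fin 2) (Fin M → Fin 2) ℂ :=
  ∑ j : Fin M, Matrix.of fun a b =>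
    (if a j = 0 ∧ b j = 1 then (ζ j.1)⁻¹ else 0) *
      ∏ i : Fin M,
        (if i < j then (if a i = b i then 1 else 0)
         else if j < i then (if a i = b i then (if b i = 0 then q else q⁻¹) else 0)
         else 1)

/-- `M = tr_{N−1}( D̄_{N−1} R_{1,…,N−2|N−1}(ζ₁,…,ζ_{N−2}|ζ_{N−1}) ) ∈ End(V^{⊗(N−2)})`:
partial trace over the last factor of `V^{⊗(N-1)}`. -/
def Mop (q δ : ℂ) (N : ℕ) (hN : 3 ≤ N) (ζ : ℕ → ℂ) :
    Matrix (Fin (N - 2) → Fin 2) (Fin (N - 2) → Fin 2) ℂ :=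
  Matrix.of fun a b => ∑ e : Fin 2,
    (embed1 (N := N - 1) (Dbar δ) ⟨N - 2, by omega⟩ * RchainUp q (N - 1) ζ (ζ (N - 2)))
      (fun i => if h : i.1 < N - 2 then a ⟨i.1, h⟩ else e)
      (fun i => if h : i.1 < N - 2 then b ⟨i.1, h⟩ else e)

/-! Write `p = q⁴`. The quasi-periodicity relations `θ(p/z|p) = θ(z|p)` and
`θ(pz|p) = -z⁻¹ θ(z|p)` (the latter from `(a;p)_∞ = (1 - a)(ap;p)_∞`) show that, because
`(−σqζ)² = q²ζ²`, the two theta quotients in `t(−σqζ)` are those of `t(ζ)` swapped, up to the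
factor `−(qζ²)⁻¹`; hence `t(ζ) t(−σqζ) = σ`. Multiplying over `k` gives `σ^M = σ^N`. -/

section Theta

variable {a p z : ℂ}

lemma multipliable_one_sub_mul_pow (hp : ‖p‖ < 1) :
    Multipliable fun k : ℕ => 1 - a * p ^ k := by
  refine (multipliable_one_add_of_summable (f := fun k : ℕ => -(a * p ^ k)) ?_).congr
    fun k => by ring
  simpa [norm_mul, norm_pow] using
    (summable_geometric_of_lt_one (norm_nonneg p) hp).mul_left ‖a‖

lemma qPoch_eq_one_sub_mul_qPoch_mul (hp : ‖p‖ < 1) :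
    qPoch a p = (1 - a) * qPoch (a * p) p := by
  have htail : Multipliable fun k : ℕ => 1 - a * p ^ (k + 1) :=
    (multipliable_one_sub_mul_pow (a := a * p) hp).congr fun k => by ring
  rw [qPoch, tprod_eq_zero_mul' (f := fun k => 1 - a * p ^ k) htail, pow_zero, mul_one, qPoch]
  congr 2 with k
  ring

lemma theta_div_eq (hp : p ≠ 0) : theta (p / z) p = theta z p := by
  rw [theta, theta, div_div_cancel₀ hp, mul_comm]

lemma theta_mul_eq (hp : p ≠ 0) (hp1 : ‖p‖ < 1) (hz : z ≠ 0) :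
    theta (p * z) p = -z⁻¹ * theta z p := by
  rw [theta, theta, qPoch_eq_one_sub_mul_qPoch_mul (a := z) hp1,
    qPoch_eq_one_sub_mul_qPoch_mul (a := p / (p * z)) hp1, mul_comm z p,
    div_mul_cancel_left₀ hp, inv_mul_eq_div]
  field_simp
  ring

end Theta

lemma tfun_mul_tfun_neg_mul {q u σ : ℂ} (hq : q ≠ 0) (hq1 : ‖q‖ < 1) (hu : u ≠ 0)
    (hσ : σ ^ 2 = 1) (h₁ : theta (q * (u ^ 2)⁻¹) (q ^ 4) ≠ 0)
    (h₂ : theta (q * ((-σ * q * u) ^ 2)⁻¹) (q ^ 4) ≠ 0) :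
    tfun q u * tfun q (-σ * q * u) = σ := by
  have hsq : (-σ * q * u) ^ 2 = q ^ 2 * u ^ 2 := by linear_combination (q * u) ^ 2 * hσ
  have hp : q ^ 4 ≠ 0 := pow_ne_zero 4 hq
  have hp1 : ‖q ^ 4‖ < 1 := by
    rw [norm_pow]
    exact pow_lt_one₀ (norm_nonneg q) hq1 (by norm_num)
  have hnum : theta (q * (-σ * q * u) ^ 2) (q ^ 4) = theta (q * (u ^ 2)⁻¹) (q ^ 4) := by
    rw [← theta_div_eq hp (z := q * (u ^ 2)⁻¹), hsq]
    congr 1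
    field_simp
  have hden : theta (q * ((-σ * q * u) ^ 2)⁻¹) (q ^ 4) =
      -(q * u ^ 2)⁻¹ * theta (q * u ^ 2) (q ^ 4) := by
    rw [← theta_mul_eq hp hp1 (by positivity), ← theta_div_eq hp, hsq]
    congr 1
    field_simp
  have h₃ : theta (q * u ^ 2) (q ^ 4) ≠ 0 := right_ne_zero_of_mul (hden ▸ h₂)
  have hσ0 : σ ≠ 0 := by
    rintro rfl
    norm_num at hσ
  rw [tfun, tfun, hnum, hden]
  generalize theta (q * (u ^ 2)⁻¹) (q ^ 4) = A at h₁ ⊢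
  generalize theta (q * u ^ 2) (q ^ 4) = B at h₃ ⊢
  field_simp
  exact hσ.symm

/-- If `M ≡ N (mod 2)`, the function `r(ζ) = ∏_{k=1}^M t(ζ/ξ_k)`
satisfies the consistency condition `r(ζ) r(−σζq) = σ^N` for `σ = ±1`. -/
theorem r_consistency (q : ℂ) (hq0 : 0 < ‖q‖) (hq1 : ‖q‖ < 1)
    (M N : ℕ) (hMN : M % 2 = N % 2) (ξ : Fin M → ℂ) (hξ : ∀ k, ξ k ≠ 0)
    (σ : ℂ) (hσ : σ = 1 ∨ σ = -1) (ζ : ℂ) (hζ : ζ ≠ 0)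
    (hden : ∀ k, theta (q * ((ζ / ξ k) ^ 2)⁻¹) (q ^ 4) ≠ 0 ∧
      theta (q * ((-σ * ζ * q / ξ k) ^ 2)⁻¹) (q ^ 4) ≠ 0) :
    (∏ k, tfun q (ζ / ξ k)) * (∏ k, tfun q (-σ * ζ * q / ξ k)) = σ ^ N := by
  have hq : q ≠ 0 := norm_pos_iff.mp hq0
  have hσ2 : σ ^ 2 = 1 := by rcases hσ with rfl | rfl <;> norm_num
  calc (∏ k, tfun q (ζ / ξ k)) * (∏ k, tfun q (-σ * ζ * q / ξ k))
      = ∏ _k : Fin M, σ := by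
        rw [← Finset.prod_mul_distrib]
        refine Finset.prod_congr rfl fun k _ => ?_
        have hk := hden k
        rw [show -σ * ζ * q / ξ k = -σ * q * (ζ / ξ k) by ring] at hk ⊢
        exact tfun_mul_tfun_neg_mul hq hq1 (div_ne_zero hζ (hξ k)) hσ2 hk.1 hk.2
    _ = σ ^ N := by
        rw [Finset.prod_const, Finset.card_univ, Fintype.card_fin, pow_eq_pow_mod M hσ2,
          hMN, ← pow_eq_pow_mod N hσ2]
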